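/- Fix a finite nonempty set X. Every multilinear degree-4 identity of binary intermolecular recombination, i.e., every coefficient vector in ℚ^15 whose corresponding linear combination of the 15 degree-4 multilinear binary monomials vanishes for all a, b, c, d ∈ R(X,2), is a ℚ-linear combination of the coefficient vectors obtained by applying the 24 permutations of the variables a, b, c, d to the identity ⟦⟦⟦a,b⟧,c⟧,d⟧ − ⟦⟦⟦a,c⟧,b⟧,d⟧ − ⟦⟦⟦b,c⟧,d⟧,a⟧ − ⟦⟦⟦b,d⟧,a⟧,c⟧ + ⟦⟦⟦b,d⟧,c⟧,a⟧ + ⟦⟦a,b⟧,⟦c,d⟧⟧ = 0 (each permuted identity rewritten in terms of the 15 monomials using commutativity). -/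

import Mathlib

open scoped BigOperators

/-- The tensor-like product of finitely supported functions. -/
noncomputable def tensorPi {n : ℕ} {B : Type*} (f : Fin n → (B →₀ ℚ)) :
    (Fin n → B) →₀ ℚ :=
  haveI := Classical.decEq B
  Finsupp.onFinset (Fintype.piFinset fun j => (f j).support)
    (fun w => ∏ j, f j (w j))
    (fun w hw => by
      rw [Fintype.mem_piFinset]
      intro j
      rw [Finsupp.mem_support_iff]
      intro h0
      exact hw (Finset.prod_eq_zero (Finset.mem_univ j) h0))

/-- `R(X,n)`: the vector space over `ℚ` with basis the set `(X*)^n` of `n`-tuples of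
elements of the free semigroup `X*` on `X`. -/
abbrev RXn (X : Type*) (n : ℕ) : Type _ := (Fin n → FreeSemigroup X) →₀ ℚ

/-- `n`-ary intermolecular recombination: the `ℚ`-multilinear extension of
`⟦a_1,…,a_n⟧ = Σ_{σ ∈ S_n} (a_{σ(1),1}, a_{σ(2),2}, …, a_{σ(n),n})` on basis elements. -/
noncomputable def recomb {X : Type*} {n : ℕ} (a : Fin n → RXn X n) : RXn X n :=
  ∑ σ : Equiv.Perm (Fin n),
    tensorPi fun j => Finsupp.mapDomain (fun w => w j) (a (σ j))

theorem recomb_perm {X : Type*} {n : ℕ} (σ : Equiv.Perm (Fin n)) (a : Fin n → RXn X n) :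
    recomb (fun i => a (σ i)) = recomb a := by
  unfold recomb
  exact Fintype.sum_equiv (Equiv.mulLeft σ) _ _ (fun τ => rfl)

/-- Formal monomials for an `n`-ary operation with variables in `α`. -/
inductive TT (n : ℕ) (α : Type) : Type
  | leaf : α → TT n α
  | node : (Fin n → TT n α) → TT n α

namespace TT

/-- The multiset of variables occurring in a formal monomial. -/
def vars {n : ℕ} {α : Type} : TT n α → Multiset α
  | leaf a => {a}
  | node f => ∑ i : Fin n, vars (f i)

/-- Two formal monomials are equal up to complete symmetry if they differ only by
permutations of the arguments of applications of the `n`-ary operation. -/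
inductive SymEq {n : ℕ} {α : Type} : TT n α → TT n α → Prop
  | leaf (a : α) : SymEq (leaf a) (leaf a)
  | node (f g : Fin n → TT n α) (σ : Equiv.Perm (Fin n))
      (h : ∀ i, SymEq (f (σ i)) (g i)) : SymEq (node f) (node g)

theorem SymEq.refl {n : ℕ} {α : Type} : ∀ t : TT n α, SymEq t t
  | .leaf a => SymEq.leaf a
  | .node f => SymEq.node f f 1 fun i => SymEq.refl (f i)

theorem vars_symEq {n : ℕ} {α : Type} {x y : TT n α} (h : SymEq x y) : vars x = vars y := by
  induction h with
  | leaf a => rfl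
  | node f g σ h ih =>
    show ∑ i, vars (f i) = ∑ i, vars (g i)
    rw [← Equiv.sum_comp σ fun i => vars (f i)]
    exact Finset.sum_congr rfl fun i _ => ih i

end TT

/-- Canonical monomials: formal monomials up to complete symmetry. -/
def CMon (n : ℕ) (α : Type) : Type := Quot (@TT.SymEq n α)

/-- The multiset of variables of a canonical monomial. -/
def CMon.vars {n : ℕ} {α : Type} : CMon n α → Multiset α :=
  Quot.lift TT.vars fun _ _ h => TT.vars_symEq h

/-- The multilinear canonical monomials of arity `n` in `k` variables: the canonical
monomials in which each of the `k` variables occurs exactly once. -/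
def Mon (n k : ℕ) : Type :=
  {q : CMon n (Fin k) // q.vars = (Finset.univ : Finset (Fin k)).val}

namespace TT

/-- Relabelling the variables of a formal monomial. -/
def mapT {n : ℕ} {α β : Type} (π : α → β) : TT n α → TT n β
  | .leaf a => .leaf (π a)
  | .node f => .node fun i => mapT π (f i)

theorem symEq_mapT {n : ℕ} {α β : Type} (π : α → β) {x y : TT n α} (h : SymEq x y) :
    SymEq (mapT π x) (mapT π y) := by
  induction h with
  | leaf a => exact SymEq.leaf (π a)
  | node f g σ h ih => exact SymEq.node _ _ σ ih

theorem vars_mapT {n : ℕ} {α β : Type} (π : α → β) (t : TT n α) :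
    (mapT π t).vars = t.vars.map π := by
  induction t with
  | leaf a => rfl
  | node f ih =>
    show ∑ i, (mapT π (f i)).vars = (∑ i, (f i).vars).map π
    rw [show Multiset.map π (∑ i : Fin n, (f i).vars)
        = ∑ i : Fin n, Multiset.map π ((f i).vars) from
      map_sum (Multiset.mapAddMonoidHom π) _ _]
    exact Finset.sum_congr rfl fun i _ => ih i

end TT

/-- Relabelling the variables of a canonical monomial. -/
def CMon.map {n : ℕ} {α β : Type} (π : α → β) : CMon n α → CMon n β :=
  Quot.lift (fun t => Quot.mk _ (TT.mapT π t)) fun _ _ h => Quot.sound (TT.symEq_mapT π h)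

theorem CMon.vars_map {n : ℕ} {α β : Type} (π : α → β) (q : CMon n α) :
    (q.map π).vars = q.vars.map π := by
  induction q using Quot.ind with
  | _ t => exact TT.vars_mapT π t

theorem univ_val_map {k : ℕ} (σ : Equiv.Perm (Fin k)) :
    (Finset.univ : Finset (Fin k)).val.map ⇑σ = (Finset.univ : Finset (Fin k)).val := by
  have h := Finset.map_univ_equiv σ
  calc (Finset.univ : Finset (Fin k)).val.map ⇑σ
      = ((Finset.univ : Finset (Fin k)).map σ.toEmbedding).val := rfl
    _ = (Finset.univ : Finset (Fin k)).val := by rw [h]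

/-- The action of a permutation of the variables on multilinear canonical monomials:
permute the variables and rewrite as a canonical monomial using complete symmetry. -/
def Mon.perm {n k : ℕ} (σ : Equiv.Perm (Fin k)) (m : Mon n k) : Mon n k :=
  ⟨m.1.map σ, by rw [CMon.vars_map, m.2, univ_val_map]⟩

/-- The action of a permutation of the variables on coefficient vectors of multilinear
polynomials. -/
noncomputable def permVec {n k : ℕ} (σ : Equiv.Perm (Fin k)) (c : Mon n k →₀ ℚ) :
    Mon n k →₀ ℚ :=
  Finsupp.mapDomain (Mon.perm σ) c

/-- Evaluation of a formal monomial in `R(X,n)`, using `n`-ary intermolecular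
recombination at each node. -/
noncomputable def TT.evalT {X : Type*} {n k : ℕ} :
    TT n (Fin k) → (Fin k → RXn X n) → RXn X n
  | .leaf a => fun v => v a
  | .node f => fun v => recomb fun i => TT.evalT (f i) v

theorem TT.evalT_symEq {X : Type*} {n k : ℕ} {x y : TT n (Fin k)} (h : TT.SymEq x y) :
    TT.evalT (X := X) x = TT.evalT y := by
  induction h with
  | leaf a => rfl
  | node f g σ h ih =>
    funext v
    show recomb (fun i => TT.evalT (f i) v) = recomb (fun i => TT.evalT (g i) v)
    have hgf : (fun i => TT.evalT (X := X) (g i) v) = fun i => TT.evalT (f (σ i)) v :=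
      funext fun i => (congrFun (ih i) v).symm
    rw [hgf]
    exact (recomb_perm σ fun i => TT.evalT (f i) v).symm

/-- Evaluation of a canonical monomial (well defined by complete symmetry of `recomb`). -/
noncomputable def CMon.eval {X : Type*} {n k : ℕ} (q : CMon n (Fin k)) :
    (Fin k → RXn X n) → RXn X n :=
  Quot.lift TT.evalT (fun _ _ h => TT.evalT_symEq h) q

/-- Evaluation of a multilinear canonical monomial, as an element of the `ℚ`-module of
functions `R(X,n)^k → R(X,n)`. -/
noncomputable def Mon.eval (X : Type*) {n k : ℕ} (m : Mon n k) :
    (Fin k → RXn X n) → RXn X n :=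
  CMon.eval m.1

/-- The linear map sending a coefficient vector (a formal linear combination of the
multilinear canonical monomials of arity `n` in `k` variables) to the multilinear map
it defines on `R(X,n)`.  Its kernel is the space of multilinear identities. -/
noncomputable def evalPoly (X : Type*) {n k : ℕ} :
    (Mon n k →₀ ℚ) →ₗ[ℚ] ((Fin k → RXn X n) → RXn X n) :=
  Finsupp.linearCombination ℚ (Mon.eval X)

/-- A variable as a formal binary monomial in 4 variables. -/
def lf4 (i : Fin 4) : TT 2 (Fin 4) := .leaf i

/-- One application of the formal binary operation. -/
def nd2 {k : ℕ} (x y : TT 2 (Fin k)) : TT 2 (Fin k) := .node ![x, y]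

/-- Constructor for multilinear canonical binary monomials in 4 variables. -/
def mk4 (t : TT 2 (Fin 4))
    (h : CMon.vars (Quot.mk _ t : CMon 2 (Fin 4)) = (Finset.univ : Finset (Fin 4)).val := by
      decide) : Mon 2 4 :=
  ⟨Quot.mk _ t, h⟩

/-- The coefficient vector of the identity
`⟦⟦⟦a,b⟧,c⟧,d⟧ − ⟦⟦⟦a,c⟧,b⟧,d⟧ − ⟦⟦⟦b,c⟧,d⟧,a⟧ − ⟦⟦⟦b,d⟧,a⟧,c⟧ + ⟦⟦⟦b,d⟧,c⟧,a⟧ + ⟦⟦a,b⟧,⟦c,d⟧⟧`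
(variables `a,b,c,d` are `0,1,2,3`). -/
noncomputable def vBS : Mon 2 4 →₀ ℚ :=
  Finsupp.single (mk4 (nd2 (nd2 (nd2 (lf4 0) (lf4 1)) (lf4 2)) (lf4 3))) 1
    - Finsupp.single (mk4 (nd2 (nd2 (nd2 (lf4 0) (lf4 2)) (lf4 1)) (lf4 3))) 1
    - Finsupp.single (mk4 (nd2 (nd2 (nd2 (lf4 1) (lf4 2)) (lf4 3)) (lf4 0))) 1
    - Finsupp.single (mk4 (nd2 (nd2 (nd2 (lf4 1) (lf4 3)) (lf4 0)) (lf4 2))) 1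
    + Finsupp.single (mk4 (nd2 (nd2 (nd2 (lf4 1) (lf4 3)) (lf4 2)) (lf4 0))) 1
    + Finsupp.single (mk4 (nd2 (nd2 (lf4 0) (lf4 1)) (nd2 (lf4 2) (lf4 3)))) 1

namespace TT

/-- An encoding of binary trees into `ℕ`, invariant under `SymEq`. -/
def enc {k : ℕ} : TT 2 (Fin k) → ℕ
  | .leaf a => 2 * a.val
  | .node f => 2 * Nat.pair (min (enc (f 0)) (enc (f 1))) (max (enc (f 0)) (enc (f 1))) + 1

lemma perm2 (σ : Equiv.Perm (Fin 2)) : (σ 0 = 0 ∧ σ 1 = 1) ∨ (σ 0 = 1 ∧ σ 1 = 0) := by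
  revert σ; decide

theorem symEq_enc {k : ℕ} {x y : TT 2 (Fin k)} (h : SymEq x y) : enc x = enc y := by
  induction h with
  | leaf a => rfl
  | node f g σ h ih =>
    show 2 * Nat.pair (min (enc (f 0)) (enc (f 1))) (max (enc (f 0)) (enc (f 1))) + 1
       = 2 * Nat.pair (min (enc (g 0)) (enc (g 1))) (max (enc (g 0)) (enc (g 1))) + 1
    have i0 := ih 0; have i1 := ih 1
    rcases perm2 σ with ⟨h0, h1⟩ | ⟨h0, h1⟩ <;> rw [h0] at i0 <;> rw [h1] at i1
    · rw [i0, i1]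
    · rw [i0, i1, min_comm (enc (g 1)) (enc (g 0)), max_comm (enc (g 1)) (enc (g 0))]

theorem symEq_of_enc {k : ℕ} {x : TT 2 (Fin k)} : ∀ {y}, enc x = enc y → SymEq x y := by
  induction x with
  | leaf a =>
    intro y h
    cases y with
    | leaf b =>
      have : a = b := by
        apply Fin.val_injective; simp only [enc] at h; omega
      rw [this]; exact SymEq.leaf b
    | node g => simp only [enc] at h; omega
  | node f ih =>
    intro y h
    cases y with
    | leaf b => simp only [enc] at h; omega
    | node g =>
      simp only [enc] at h
      have hp : Nat.pair (min (enc (f 0)) (enc (f 1))) (max (enc (f 0)) (enc (f 1)))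
          = Nat.pair (min (enc (g 0)) (enc (g 1))) (max (enc (g 0)) (enc (g 1))) := by omega
      rw [Nat.pair_eq_pair] at hp
      have hcase : (enc (f 0) = enc (g 0) ∧ enc (f 1) = enc (g 1))
          ∨ (enc (f 0) = enc (g 1) ∧ enc (f 1) = enc (g 0)) := by omega
      rcases hcase with ⟨e0, e1⟩ | ⟨e0, e1⟩
      · refine SymEq.node f g 1 fun i => ?_
        have h1 : (1 : Equiv.Perm (Fin 2)) i = i := rfl
        rw [h1]
        match i with
        | 0 => exact ih 0 e0
        | 1 => exact ih 1 e1
      · refine SymEq.node f g (Equiv.swap 0 1) fun i => ?_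
        match i with
        | 0 =>
          rw [show (Equiv.swap (0 : Fin 2) 1) 0 = 1 from Equiv.swap_apply_left 0 1]
          exact ih 1 e1
        | 1 =>
          rw [show (Equiv.swap (0 : Fin 2) 1) 1 = 0 from Equiv.swap_apply_right 0 1]
          exact ih 0 e0

end TT

/-- `enc` descends to canonical monomials. -/
def CMon.enc {k : ℕ} : CMon 2 (Fin k) → ℕ :=
  Quot.lift TT.enc fun _ _ h => TT.symEq_enc h

theorem cmon_mk_eq_iff {k : ℕ} {t t' : TT 2 (Fin k)} :
    (Quot.mk _ t : CMon 2 (Fin k)) = Quot.mk _ t' ↔ TT.enc t = TT.enc t' :=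
  ⟨fun h => congrArg CMon.enc h, fun h => Quot.sound (TT.symEq_of_enc h)⟩
namespace TT

lemma vars_node {k : ℕ} (f : Fin 2 → TT 2 (Fin k)) :
    (TT.node f).vars = (f 0).vars + (f 1).vars := by
  show (∑ i : Fin 2, (f i).vars) = _
  rw [Fin.sum_univ_two]

lemma one_le_card_vars {k : ℕ} (t : TT 2 (Fin k)) : 1 ≤ Multiset.card t.vars := by
  induction t with
  | leaf a => simp [vars]
  | node f ih =>
    rw [vars_node, Multiset.card_add]
    have := ih 0
    omega

lemma eq_leaf_of_card {k : ℕ} (t : TT 2 (Fin k)) (h : Multiset.card t.vars = 1) :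
    ∃ a, t = .leaf a := by
  cases t with
  | leaf a => exact ⟨a, rfl⟩
  | node f =>
    exfalso
    rw [vars_node, Multiset.card_add] at h
    have h0 := one_le_card_vars (f 0); have h1 := one_le_card_vars (f 1)
    omega

lemma symEq_two {k : ℕ} (t : TT 2 (Fin k)) (h : Multiset.card t.vars = 2) :
    ∃ a b, SymEq t (nd2 (.leaf a) (.leaf b)) := by
  cases t with
  | leaf a => simp [vars] at h
  | node f =>
    rw [vars_node, Multiset.card_add] at h
    have h0 := one_le_card_vars (f 0); have h1 := one_le_card_vars (f 1)
    obtain ⟨a, ha⟩ := eq_leaf_of_card (f 0) (by omega)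
    obtain ⟨b, hb⟩ := eq_leaf_of_card (f 1) (by omega)
    refine ⟨a, b, SymEq.node f _ 1 fun i => ?_⟩
    have h1' : (1 : Equiv.Perm (Fin 2)) i = i := rfl
    rw [h1']
    match i with
    | 0 => show SymEq (f 0) (.leaf a); rw [ha]; exact SymEq.leaf a
    | 1 => show SymEq (f 1) (.leaf b); rw [hb]; exact SymEq.leaf b

lemma symEq_three {k : ℕ} (t : TT 2 (Fin k)) (h : Multiset.card t.vars = 3) :
    ∃ a b u, SymEq t (nd2 (nd2 (.leaf a) (.leaf b)) (.leaf u)) := by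
  cases t with
  | leaf a => simp [vars] at h
  | node f =>
    rw [vars_node, Multiset.card_add] at h
    have h0 := one_le_card_vars (f 0); have h1 := one_le_card_vars (f 1)
    rcases Nat.lt_or_ge (Multiset.card (f 0).vars) 2 with hlt | hge
    · -- f 0 is a leaf, f 1 has two vars
      obtain ⟨u, hu⟩ := eq_leaf_of_card (f 0) (by omega)
      obtain ⟨a, b, hab⟩ := symEq_two (f 1) (by omega)
      refine ⟨a, b, u, SymEq.node f _ (Equiv.swap 0 1) fun i => ?_⟩
      match i with
      | 0 =>
        rw [show (Equiv.swap (0 : Fin 2) 1) 0 = 1 from Equiv.swap_apply_left 0 1]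
        exact hab
      | 1 =>
        rw [show (Equiv.swap (0 : Fin 2) 1) 1 = 0 from Equiv.swap_apply_right 0 1]
        show SymEq (f 0) (.leaf u); rw [hu]; exact SymEq.leaf u
    · -- f 0 has two vars, f 1 is a leaf
      obtain ⟨a, b, hab⟩ := symEq_two (f 0) (by omega)
      obtain ⟨u, hu⟩ := eq_leaf_of_card (f 1) (by omega)
      refine ⟨a, b, u, SymEq.node f _ 1 fun i => ?_⟩
      have h1' : (1 : Equiv.Perm (Fin 2)) i = i := rfl
      rw [h1']
      match i with
      | 0 => exact hab
      | 1 => show SymEq (f 1) (.leaf u); rw [hu]; exact SymEq.leaf u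

lemma symEq_four {k : ℕ} (t : TT 2 (Fin k)) (h : Multiset.card t.vars = 4) :
    (∃ a b u v, SymEq t (nd2 (nd2 (nd2 (.leaf a) (.leaf b)) (.leaf u)) (.leaf v))) ∨
    (∃ a b u v, SymEq t (nd2 (nd2 (.leaf a) (.leaf b)) (nd2 (.leaf u) (.leaf v)))) := by
  cases t with
  | leaf a => simp [vars] at h
  | node f =>
    rw [vars_node, Multiset.card_add] at h
    have h0 := one_le_card_vars (f 0); have h1 := one_le_card_vars (f 1)
    rcases Nat.lt_or_ge (Multiset.card (f 0).vars) 2 with hlt | hge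
    · -- (1,3)
      obtain ⟨v, hv⟩ := eq_leaf_of_card (f 0) (by omega)
      obtain ⟨a, b, u, habu⟩ := symEq_three (f 1) (by omega)
      refine Or.inl ⟨a, b, u, v, SymEq.node f _ (Equiv.swap 0 1) fun i => ?_⟩
      match i with
      | 0 =>
        rw [show (Equiv.swap (0 : Fin 2) 1) 0 = 1 from Equiv.swap_apply_left 0 1]
        exact habu
      | 1 =>
        rw [show (Equiv.swap (0 : Fin 2) 1) 1 = 0 from Equiv.swap_apply_right 0 1]
        show SymEq (f 0) (.leaf v); rw [hv]; exact SymEq.leaf v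
    · rcases Nat.lt_or_ge (Multiset.card (f 0).vars) 3 with hlt2 | hge2
      · -- (2,2)
        obtain ⟨a, b, hab⟩ := symEq_two (f 0) (by omega)
        obtain ⟨u, v, huv⟩ := symEq_two (f 1) (by omega)
        refine Or.inr ⟨a, b, u, v, SymEq.node f _ 1 fun i => ?_⟩
        have h1' : (1 : Equiv.Perm (Fin 2)) i = i := rfl
        rw [h1']
        match i with
        | 0 => exact hab
        | 1 => exact huv
      · -- (3,1)
        obtain ⟨a, b, u, habu⟩ := symEq_three (f 0) (by omega)
        obtain ⟨v, hv⟩ := eq_leaf_of_card (f 1) (by omega)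
        refine Or.inl ⟨a, b, u, v, SymEq.node f _ 1 fun i => ?_⟩
        have h1' : (1 : Equiv.Perm (Fin 2)) i = i := rfl
        rw [h1']
        match i with
        | 0 => exact habu
        | 1 => show SymEq (f 1) (.leaf v); rw [hv]; exact SymEq.leaf v

end TT

/-- The 15 canonical trees, in a fixed order. -/
def tt15 : Fin 15 → TT 2 (Fin 4) :=
  ![nd2 (nd2 (nd2 (lf4 0) (lf4 1)) (lf4 2)) (lf4 3),
    nd2 (nd2 (nd2 (lf4 0) (lf4 1)) (lf4 3)) (lf4 2),
    nd2 (nd2 (nd2 (lf4 0) (lf4 2)) (lf4 1)) (lf4 3),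
    nd2 (nd2 (nd2 (lf4 0) (lf4 2)) (lf4 3)) (lf4 1),
    nd2 (nd2 (nd2 (lf4 0) (lf4 3)) (lf4 1)) (lf4 2),
    nd2 (nd2 (nd2 (lf4 0) (lf4 3)) (lf4 2)) (lf4 1),
    nd2 (nd2 (nd2 (lf4 1) (lf4 2)) (lf4 0)) (lf4 3),
    nd2 (nd2 (nd2 (lf4 1) (lf4 2)) (lf4 3)) (lf4 0),
    nd2 (nd2 (nd2 (lf4 1) (lf4 3)) (lf4 0)) (lf4 2),
    nd2 (nd2 (nd2 (lf4 1) (lf4 3)) (lf4 2)) (lf4 0),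
    nd2 (nd2 (nd2 (lf4 2) (lf4 3)) (lf4 0)) (lf4 1),
    nd2 (nd2 (nd2 (lf4 2) (lf4 3)) (lf4 1)) (lf4 0),
    nd2 (nd2 (lf4 0) (lf4 1)) (nd2 (lf4 2) (lf4 3)),
    nd2 (nd2 (lf4 0) (lf4 2)) (nd2 (lf4 1) (lf4 3)),
    nd2 (nd2 (lf4 0) (lf4 3)) (nd2 (lf4 1) (lf4 2))]

/-- The 15 canonical multilinear binary monomials in 4 variables. -/
def M15 : Fin 15 → Mon 2 4 := fun i =>
  ⟨Quot.mk _ (tt15 i), by revert i; decide⟩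

lemma M15_inj : ∀ {i j : Fin 15}, M15 i = M15 j → i = j := by
  have key : ∀ i j : Fin 15, TT.enc (tt15 i) = TT.enc (tt15 j) → i = j := by decide
  intro i j h
  exact key i j (congrArg (fun m : Mon 2 4 => CMon.enc m.1) h)

theorem mem15 (m : Mon 2 4) : ∃ i : Fin 15, m = M15 i := by
  obtain ⟨q, hq⟩ := m
  induction q using Quot.ind with
  | _ t =>
  have hqv : t.vars = (Finset.univ : Finset (Fin 4)).val := hq
  have hcard : Multiset.card t.vars = 4 := by rw [hqv]; decide
  have key1 : ∀ a b u v : Fin 4,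
      (nd2 (nd2 (nd2 (.leaf a) (.leaf b)) (.leaf u)) (.leaf v) : TT 2 (Fin 4)).vars
        = (Finset.univ : Finset (Fin 4)).val →
      ∃ i : Fin 15, TT.enc (nd2 (nd2 (nd2 (.leaf a) (.leaf b)) (.leaf u)) (.leaf v))
        = TT.enc (tt15 i) := by decide
  have key2 : ∀ a b u v : Fin 4,
      (nd2 (nd2 (.leaf a) (.leaf b)) (nd2 (.leaf u) (.leaf v)) : TT 2 (Fin 4)).vars
        = (Finset.univ : Finset (Fin 4)).val →
      ∃ i : Fin 15, TT.enc (nd2 (nd2 (.leaf a) (.leaf b)) (nd2 (.leaf u) (.leaf v)))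
        = TT.enc (tt15 i) := by decide
  rcases TT.symEq_four t hcard with ⟨a, b, u, v, hs⟩ | ⟨a, b, u, v, hs⟩
  · obtain ⟨i, hi⟩ := key1 a b u v (by rw [← TT.vars_symEq hs]; exact hqv)
    exact ⟨i, Subtype.ext (cmon_mk_eq_iff.mpr ((TT.symEq_enc hs).trans hi))⟩
  · obtain ⟨i, hi⟩ := key2 a b u v (by rw [← TT.vars_symEq hs]; exact hqv)
    exact ⟨i, Subtype.ext (cmon_mk_eq_iff.mpr ((TT.symEq_enc hs).trans hi))⟩

lemma sg_apply (q : ℚ) (i j : Fin 15) :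
    (Finsupp.single (M15 i) q) (M15 j) = if i = j then q else 0 := by
  by_cases h : i = j
  · subst h; rw [if_pos rfl]; exact Finsupp.single_eq_same
  · rw [if_neg h]; exact Finsupp.single_eq_of_ne' (fun he => h (M15_inj he))
section Eval

variable {X : Type*}

lemma tensorPi_apply {n : ℕ} {B : Type*} (f : Fin n → (B →₀ ℚ)) (w : Fin n → B) :
    tensorPi f w = ∏ j, f j (w j) := rfl

lemma tensorPi_single {B : Type*} (u : Fin 2 → B) :
    tensorPi (fun j => Finsupp.single (u j) (1 : ℚ)) = Finsupp.single u 1 := by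
  ext w
  rw [tensorPi_apply]
  by_cases h : w = u
  · subst h
    rw [Finsupp.single_eq_same]
    apply Finset.prod_eq_one
    intro j _
    rw [Finsupp.single_eq_same]
  · rw [Finsupp.single_eq_of_ne' (Ne.symm h)]
    obtain ⟨j, hj⟩ := Function.ne_iff.mp h
    exact Finset.prod_eq_zero (Finset.mem_univ j) (Finsupp.single_eq_of_ne' (Ne.symm hj))

/-- half of the binary recombination -/
noncomputable def Phalf (a b : RXn X 2) : RXn X 2 :=
  tensorPi ![Finsupp.mapDomain (fun w => w 0) a, Finsupp.mapDomain (fun w => w 1) b]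

lemma Phalf_single (u v : Fin 2 → FreeSemigroup X) :
    Phalf (Finsupp.single u (1:ℚ)) (Finsupp.single v 1) = Finsupp.single ![u 0, v 1] 1 := by
  unfold Phalf
  rw [Finsupp.mapDomain_single, Finsupp.mapDomain_single]
  rw [show ![Finsupp.single (u 0) (1:ℚ), Finsupp.single (v 1) 1]
      = fun j => Finsupp.single (![u 0, v 1] j) (1:ℚ) from by
    funext j; fin_cases j <;> rfl]
  exact tensorPi_single _

lemma Phalf_addl (a b u : RXn X 2) : Phalf (a + b) u = Phalf a u + Phalf b u := by
  unfold Phalf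
  rw [Finsupp.mapDomain_add]
  ext w
  simp only [tensorPi_apply, Finsupp.add_apply, Fin.prod_univ_two, Matrix.cons_val_zero,
    Matrix.cons_val_one, Matrix.head_cons, add_mul]

lemma Phalf_addr (a b u : RXn X 2) : Phalf u (a + b) = Phalf u a + Phalf u b := by
  unfold Phalf
  rw [Finsupp.mapDomain_add]
  ext w
  simp only [tensorPi_apply, Finsupp.add_apply, Fin.prod_univ_two, Matrix.cons_val_zero,
    Matrix.cons_val_one, Matrix.head_cons, mul_add]

/-- binary recombination -/
noncomputable def br (a b : RXn X 2) : RXn X 2 := recomb ![a, b]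

lemma br_eq (a b : RXn X 2) : br a b = Phalf a b + Phalf b a := by
  unfold br recomb
  rw [show (Finset.univ : Finset (Equiv.Perm (Fin 2))) = {1, Equiv.swap 0 1} from by decide]
  rw [Finset.sum_pair (by decide : (1 : Equiv.Perm (Fin 2)) ≠ Equiv.swap 0 1)]
  refine congrArg₂ (· + ·) ?_ ?_
  · exact congrArg tensorPi (funext fun j => by fin_cases j <;> rfl)
  · exact congrArg tensorPi (funext fun j => by
      fin_cases j <;>
        simp [Equiv.swap_apply_left, Equiv.swap_apply_right, Matrix.cons_val_zero,
          Matrix.cons_val_one, Matrix.head_cons])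

lemma br_addl (a b u : RXn X 2) : br (a + b) u = br a u + br b u := by
  rw [br_eq, br_eq, br_eq, Phalf_addl, Phalf_addr]
  abel

lemma br_addr (a b u : RXn X 2) : br u (a + b) = br u a + br u b := by
  rw [br_eq, br_eq, br_eq, Phalf_addr, Phalf_addl]
  abel

variable (x : X)

/-- the word `x^(k+1)` -/
def wd (k : ℕ) : FreeSemigroup X := ⟨x, List.replicate k x⟩

lemma wd_inj {k l : ℕ} (h : wd x k = wd x l) : k = l := by
  have := congrArg (fun w => w.2.length) h
  simpa [wd] using this

/-- basis vectors of `R(X,2)` built from powers of `x` -/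
noncomputable def sx (i j : ℕ) : RXn X 2 := Finsupp.single ![wd x i, wd x j] 1

lemma br_s (i j k l : ℕ) : br (sx x i j) (sx x k l) = sx x i l + sx x k j := by
  unfold sx
  rw [br_eq, Phalf_single, Phalf_single]
  simp only [Matrix.cons_val_zero, Matrix.cons_val_one, Matrix.head_cons]

lemma sv_apply (i j k l : ℕ) :
    (sx x i j) ![wd x k, wd x l] = if i = k ∧ j = l then 1 else 0 := by
  unfold sx
  split_ifs with h
  · obtain ⟨rfl, rfl⟩ := h
    exact Finsupp.single_eq_same
  · apply Finsupp.single_eq_of_ne'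
    intro he
    exact h ⟨wd_inj x (congrFun he 0), wd_inj x (congrFun he 1)⟩

/-- the input tuple -/
noncomputable def vv : Fin 4 → RXn X 2 := ![sx x 0 1, sx x 2 3, sx x 4 5, sx x 6 7]

lemma evalT_nd2 {p q : TT 2 (Fin 4)} (v : Fin 4 → RXn X 2) :
    TT.evalT (nd2 p q) v = br (TT.evalT p v) (TT.evalT q v) := by
  have h1 : TT.evalT (nd2 p q) v = recomb fun i => TT.evalT (![p, q] i) v := rfl
  rw [h1]
  exact congrArg recomb (funext fun i => by fin_cases i <;> rfl)

end Eval

theorem c_decomp (c : Mon 2 4 →₀ ℚ) :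
    c = c (M15 0) • Finsupp.single (M15 0) 1
      + c (M15 1) • Finsupp.single (M15 1) 1
      + c (M15 2) • Finsupp.single (M15 2) 1
      + c (M15 3) • Finsupp.single (M15 3) 1
      + c (M15 4) • Finsupp.single (M15 4) 1
      + c (M15 5) • Finsupp.single (M15 5) 1
      + c (M15 6) • Finsupp.single (M15 6) 1
      + c (M15 7) • Finsupp.single (M15 7) 1
      + c (M15 8) • Finsupp.single (M15 8) 1
      + c (M15 9) • Finsupp.single (M15 9) 1
      + c (M15 10) • Finsupp.single (M15 10) 1
      + c (M15 11) • Finsupp.single (M15 11) 1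
      + c (M15 12) • Finsupp.single (M15 12) 1
      + c (M15 13) • Finsupp.single (M15 13) 1
      + c (M15 14) • Finsupp.single (M15 14) 1 := by
  ext m
  obtain ⟨j, rfl⟩ := mem15 m
  simp only [Finsupp.add_apply, Finsupp.smul_apply, sg_apply, smul_eq_mul]
  fin_cases j <;> simp

lemma evB0 {X : Type*} (x : X) : Mon.eval X (M15 0) (vv x) = br (br (br (sx x 0 1) (sx x 2 3)) (sx x 4 5)) (sx x 6 7) := by
  show TT.evalT (nd2 (nd2 (nd2 (lf4 0) (lf4 1)) (lf4 2)) (lf4 3)) (vv x) = _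
  simp only [evalT_nd2]
  rfl

lemma evB1 {X : Type*} (x : X) : Mon.eval X (M15 1) (vv x) = br (br (br (sx x 0 1) (sx x 2 3)) (sx x 6 7)) (sx x 4 5) := by
  show TT.evalT (nd2 (nd2 (nd2 (lf4 0) (lf4 1)) (lf4 3)) (lf4 2)) (vv x) = _
  simp only [evalT_nd2]
  rfl

lemma evB2 {X : Type*} (x : X) : Mon.eval X (M15 2) (vv x) = br (br (br (sx x 0 1) (sx x 4 5)) (sx x 2 3)) (sx x 6 7) := by
  show TT.evalT (nd2 (nd2 (nd2 (lf4 0) (lf4 2)) (lf4 1)) (lf4 3)) (vv x) = _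
  simp only [evalT_nd2]
  rfl

lemma evB3 {X : Type*} (x : X) : Mon.eval X (M15 3) (vv x) = br (br (br (sx x 0 1) (sx x 4 5)) (sx x 6 7)) (sx x 2 3) := by
  show TT.evalT (nd2 (nd2 (nd2 (lf4 0) (lf4 2)) (lf4 3)) (lf4 1)) (vv x) = _
  simp only [evalT_nd2]
  rfl

lemma evB4 {X : Type*} (x : X) : Mon.eval X (M15 4) (vv x) = br (br (br (sx x 0 1) (sx x 6 7)) (sx x 2 3)) (sx x 4 5) := by
  show TT.evalT (nd2 (nd2 (nd2 (lf4 0) (lf4 3)) (lf4 1)) (lf4 2)) (vv x) = _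
  simp only [evalT_nd2]
  rfl

lemma evB5 {X : Type*} (x : X) : Mon.eval X (M15 5) (vv x) = br (br (br (sx x 0 1) (sx x 6 7)) (sx x 4 5)) (sx x 2 3) := by
  show TT.evalT (nd2 (nd2 (nd2 (lf4 0) (lf4 3)) (lf4 2)) (lf4 1)) (vv x) = _
  simp only [evalT_nd2]
  rfl

lemma evB6 {X : Type*} (x : X) : Mon.eval X (M15 6) (vv x) = br (br (br (sx x 2 3) (sx x 4 5)) (sx x 0 1)) (sx x 6 7) := by
  show TT.evalT (nd2 (nd2 (nd2 (lf4 1) (lf4 2)) (lf4 0)) (lf4 3)) (vv x) = _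
  simp only [evalT_nd2]
  rfl

lemma evB7 {X : Type*} (x : X) : Mon.eval X (M15 7) (vv x) = br (br (br (sx x 2 3) (sx x 4 5)) (sx x 6 7)) (sx x 0 1) := by
  show TT.evalT (nd2 (nd2 (nd2 (lf4 1) (lf4 2)) (lf4 3)) (lf4 0)) (vv x) = _
  simp only [evalT_nd2]
  rfl

lemma evB8 {X : Type*} (x : X) : Mon.eval X (M15 8) (vv x) = br (br (br (sx x 2 3) (sx x 6 7)) (sx x 0 1)) (sx x 4 5) := by
  show TT.evalT (nd2 (nd2 (nd2 (lf4 1) (lf4 3)) (lf4 0)) (lf4 2)) (vv x) = _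
  simp only [evalT_nd2]
  rfl

lemma evB9 {X : Type*} (x : X) : Mon.eval X (M15 9) (vv x) = br (br (br (sx x 2 3) (sx x 6 7)) (sx x 4 5)) (sx x 0 1) := by
  show TT.evalT (nd2 (nd2 (nd2 (lf4 1) (lf4 3)) (lf4 2)) (lf4 0)) (vv x) = _
  simp only [evalT_nd2]
  rfl

lemma evB10 {X : Type*} (x : X) : Mon.eval X (M15 10) (vv x) = br (br (br (sx x 4 5) (sx x 6 7)) (sx x 0 1)) (sx x 2 3) := by
  show TT.evalT (nd2 (nd2 (nd2 (lf4 2) (lf4 3)) (lf4 0)) (lf4 1)) (vv x) = _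
  simp only [evalT_nd2]
  rfl

lemma evB11 {X : Type*} (x : X) : Mon.eval X (M15 11) (vv x) = br (br (br (sx x 4 5) (sx x 6 7)) (sx x 2 3)) (sx x 0 1) := by
  show TT.evalT (nd2 (nd2 (nd2 (lf4 2) (lf4 3)) (lf4 1)) (lf4 0)) (vv x) = _
  simp only [evalT_nd2]
  rfl

lemma evB12 {X : Type*} (x : X) : Mon.eval X (M15 12) (vv x) = br (br (sx x 0 1) (sx x 2 3)) (br (sx x 4 5) (sx x 6 7)) := by
  show TT.evalT (nd2 (nd2 (lf4 0) (lf4 1)) (nd2 (lf4 2) (lf4 3))) (vv x) = _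
  simp only [evalT_nd2]
  rfl

lemma evB13 {X : Type*} (x : X) : Mon.eval X (M15 13) (vv x) = br (br (sx x 0 1) (sx x 4 5)) (br (sx x 2 3) (sx x 6 7)) := by
  show TT.evalT (nd2 (nd2 (lf4 0) (lf4 2)) (nd2 (lf4 1) (lf4 3))) (vv x) = _
  simp only [evalT_nd2]
  rfl

lemma evB14 {X : Type*} (x : X) : Mon.eval X (M15 14) (vv x) = br (br (sx x 0 1) (sx x 6 7)) (br (sx x 2 3) (sx x 4 5)) := by
  show TT.evalT (nd2 (nd2 (lf4 0) (lf4 3)) (nd2 (lf4 1) (lf4 2))) (vv x) = _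
  simp only [evalT_nd2]
  rfl

lemma permVec_add (σ : Equiv.Perm (Fin 4)) (a b : Mon 2 4 →₀ ℚ) :
    permVec σ (a + b) = permVec σ a + permVec σ b :=
  Finsupp.mapDomain_add

lemma permVec_sub (σ : Equiv.Perm (Fin 4)) (a b : Mon 2 4 →₀ ℚ) :
    permVec σ (a - b) = permVec σ a - permVec σ b :=
  map_sub (Finsupp.lmapDomain ℚ ℚ (Mon.perm σ)) a b

lemma permVec_single (σ : Equiv.Perm (Fin 4)) (m : Mon 2 4) (q : ℚ) :
    permVec σ (Finsupp.single m q) = Finsupp.single (Mon.perm σ m) q :=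
  Finsupp.mapDomain_single

def pσ1 : Equiv.Perm (Fin 4) :=
  ⟨![0,1,2,3], ![0,1,2,3], by decide, by decide⟩

def pσ2 : Equiv.Perm (Fin 4) :=
  ⟨![0,1,3,2], ![0,1,3,2], by decide, by decide⟩

def pσ3 : Equiv.Perm (Fin 4) :=
  ⟨![0,2,1,3], ![0,2,1,3], by decide, by decide⟩

def pσ4 : Equiv.Perm (Fin 4) :=
  ⟨![0,2,3,1], ![0,3,1,2], by decide, by decide⟩

def pσ5 : Equiv.Perm (Fin 4) :=
  ⟨![0,3,1,2], ![0,2,3,1], by decide, by decide⟩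

def pσ6 : Equiv.Perm (Fin 4) :=
  ⟨![0,3,2,1], ![0,3,2,1], by decide, by decide⟩

def pσ7 : Equiv.Perm (Fin 4) :=
  ⟨![1,0,2,3], ![1,0,2,3], by decide, by decide⟩

def pσ8 : Equiv.Perm (Fin 4) :=
  ⟨![1,2,0,3], ![2,0,1,3], by decide, by decide⟩

def pσ9 : Equiv.Perm (Fin 4) :=
  ⟨![1,2,3,0], ![3,0,1,2], by decide, by decide⟩

lemma pv1 : permVec pσ1 vBS = Finsupp.single (M15 0) 1 - Finsupp.single (M15 2) 1 - Finsupp.single (M15 7) 1 - Finsupp.single (M15 8) 1 + Finsupp.single (M15 9) 1 + Finsupp.single (M15 12) 1 := by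
  have i11 : ∀ h, Mon.perm pσ1 (⟨Quot.mk _ (nd2 (nd2 (nd2 (lf4 0) (lf4 1)) (lf4 2)) (lf4 3)), h⟩ : Mon 2 4) = M15 0 :=
    fun h => Subtype.ext (cmon_mk_eq_iff.mpr (by decide))
  have i12 : ∀ h, Mon.perm pσ1 (⟨Quot.mk _ (nd2 (nd2 (nd2 (lf4 0) (lf4 2)) (lf4 1)) (lf4 3)), h⟩ : Mon 2 4) = M15 2 :=
    fun h => Subtype.ext (cmon_mk_eq_iff.mpr (by decide))
  have i13 : ∀ h, Mon.perm pσ1 (⟨Quot.mk _ (nd2 (nd2 (nd2 (lf4 1) (lf4 2)) (lf4 3)) (lf4 0)), h⟩ : Mon 2 4) = M15 7 :=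
    fun h => Subtype.ext (cmon_mk_eq_iff.mpr (by decide))
  have i14 : ∀ h, Mon.perm pσ1 (⟨Quot.mk _ (nd2 (nd2 (nd2 (lf4 1) (lf4 3)) (lf4 0)) (lf4 2)), h⟩ : Mon 2 4) = M15 8 :=
    fun h => Subtype.ext (cmon_mk_eq_iff.mpr (by decide))
  have i15 : ∀ h, Mon.perm pσ1 (⟨Quot.mk _ (nd2 (nd2 (nd2 (lf4 1) (lf4 3)) (lf4 2)) (lf4 0)), h⟩ : Mon 2 4) = M15 9 :=
    fun h => Subtype.ext (cmon_mk_eq_iff.mpr (by decide))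
  have i16 : ∀ h, Mon.perm pσ1 (⟨Quot.mk _ (nd2 (nd2 (lf4 0) (lf4 1)) (nd2 (lf4 2) (lf4 3))), h⟩ : Mon 2 4) = M15 12 :=
    fun h => Subtype.ext (cmon_mk_eq_iff.mpr (by decide))
  simp only [vBS, mk4, permVec_add, permVec_sub, permVec_single]
  erw [permVec_single, permVec_single, permVec_single, permVec_single, permVec_single, permVec_single]
  erw [i11, i12, i13, i14, i15, i16]

lemma pv2 : permVec pσ2 vBS = Finsupp.single (M15 1) 1 - Finsupp.single (M15 4) 1 - Finsupp.single (M15 9) 1 - Finsupp.single (M15 6) 1 + Finsupp.single (M15 7) 1 + Finsupp.single (M15 12) 1 := by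
  have i21 : ∀ h, Mon.perm pσ2 (⟨Quot.mk _ (nd2 (nd2 (nd2 (lf4 0) (lf4 1)) (lf4 2)) (lf4 3)), h⟩ : Mon 2 4) = M15 1 :=
    fun h => Subtype.ext (cmon_mk_eq_iff.mpr (by decide))
  have i22 : ∀ h, Mon.perm pσ2 (⟨Quot.mk _ (nd2 (nd2 (nd2 (lf4 0) (lf4 2)) (lf4 1)) (lf4 3)), h⟩ : Mon 2 4) = M15 4 :=
    fun h => Subtype.ext (cmon_mk_eq_iff.mpr (by decide))
  have i23 : ∀ h, Mon.perm pσ2 (⟨Quot.mk _ (nd2 (nd2 (nd2 (lf4 1) (lf4 2)) (lf4 3)) (lf4 0)), h⟩ : Mon 2 4) = M15 9 :=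
    fun h => Subtype.ext (cmon_mk_eq_iff.mpr (by decide))
  have i24 : ∀ h, Mon.perm pσ2 (⟨Quot.mk _ (nd2 (nd2 (nd2 (lf4 1) (lf4 3)) (lf4 0)) (lf4 2)), h⟩ : Mon 2 4) = M15 6 :=
    fun h => Subtype.ext (cmon_mk_eq_iff.mpr (by decide))
  have i25 : ∀ h, Mon.perm pσ2 (⟨Quot.mk _ (nd2 (nd2 (nd2 (lf4 1) (lf4 3)) (lf4 2)) (lf4 0)), h⟩ : Mon 2 4) = M15 7 :=
    fun h => Subtype.ext (cmon_mk_eq_iff.mpr (by decide))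
  have i26 : ∀ h, Mon.perm pσ2 (⟨Quot.mk _ (nd2 (nd2 (lf4 0) (lf4 1)) (nd2 (lf4 2) (lf4 3))), h⟩ : Mon 2 4) = M15 12 :=
    fun h => Subtype.ext (cmon_mk_eq_iff.mpr (by decide))
  simp only [vBS, mk4, permVec_add, permVec_sub, permVec_single]
  erw [permVec_single, permVec_single, permVec_single, permVec_single, permVec_single, permVec_single]
  erw [i21, i22, i23, i24, i25, i26]

lemma pv3 : permVec pσ3 vBS = Finsupp.single (M15 2) 1 - Finsupp.single (M15 0) 1 - Finsupp.single (M15 7) 1 - Finsupp.single (M15 10) 1 + Finsupp.single (M15 11) 1 + Finsupp.single (M15 13) 1 := by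
  have i31 : ∀ h, Mon.perm pσ3 (⟨Quot.mk _ (nd2 (nd2 (nd2 (lf4 0) (lf4 1)) (lf4 2)) (lf4 3)), h⟩ : Mon 2 4) = M15 2 :=
    fun h => Subtype.ext (cmon_mk_eq_iff.mpr (by decide))
  have i32 : ∀ h, Mon.perm pσ3 (⟨Quot.mk _ (nd2 (nd2 (nd2 (lf4 0) (lf4 2)) (lf4 1)) (lf4 3)), h⟩ : Mon 2 4) = M15 0 :=
    fun h => Subtype.ext (cmon_mk_eq_iff.mpr (by decide))
  have i33 : ∀ h, Mon.perm pσ3 (⟨Quot.mk _ (nd2 (nd2 (nd2 (lf4 1) (lf4 2)) (lf4 3)) (lf4 0)), h⟩ : Mon 2 4) = M15 7 :=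
    fun h => Subtype.ext (cmon_mk_eq_iff.mpr (by decide))
  have i34 : ∀ h, Mon.perm pσ3 (⟨Quot.mk _ (nd2 (nd2 (nd2 (lf4 1) (lf4 3)) (lf4 0)) (lf4 2)), h⟩ : Mon 2 4) = M15 10 :=
    fun h => Subtype.ext (cmon_mk_eq_iff.mpr (by decide))
  have i35 : ∀ h, Mon.perm pσ3 (⟨Quot.mk _ (nd2 (nd2 (nd2 (lf4 1) (lf4 3)) (lf4 2)) (lf4 0)), h⟩ : Mon 2 4) = M15 11 :=
    fun h => Subtype.ext (cmon_mk_eq_iff.mpr (by decide))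
  have i36 : ∀ h, Mon.perm pσ3 (⟨Quot.mk _ (nd2 (nd2 (lf4 0) (lf4 1)) (nd2 (lf4 2) (lf4 3))), h⟩ : Mon 2 4) = M15 13 :=
    fun h => Subtype.ext (cmon_mk_eq_iff.mpr (by decide))
  simp only [vBS, mk4, permVec_add, permVec_sub, permVec_single]
  erw [permVec_single, permVec_single, permVec_single, permVec_single, permVec_single, permVec_single]
  erw [i31, i32, i33, i34, i35, i36]

lemma pv4 : permVec pσ4 vBS = Finsupp.single (M15 3) 1 - Finsupp.single (M15 5) 1 - Finsupp.single (M15 11) 1 - Finsupp.single (M15 6) 1 + Finsupp.single (M15 7) 1 + Finsupp.single (M15 13) 1 := by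
  have i41 : ∀ h, Mon.perm pσ4 (⟨Quot.mk _ (nd2 (nd2 (nd2 (lf4 0) (lf4 1)) (lf4 2)) (lf4 3)), h⟩ : Mon 2 4) = M15 3 :=
    fun h => Subtype.ext (cmon_mk_eq_iff.mpr (by decide))
  have i42 : ∀ h, Mon.perm pσ4 (⟨Quot.mk _ (nd2 (nd2 (nd2 (lf4 0) (lf4 2)) (lf4 1)) (lf4 3)), h⟩ : Mon 2 4) = M15 5 :=
    fun h => Subtype.ext (cmon_mk_eq_iff.mpr (by decide))
  have i43 : ∀ h, Mon.perm pσ4 (⟨Quot.mk _ (nd2 (nd2 (nd2 (lf4 1) (lf4 2)) (lf4 3)) (lf4 0)), h⟩ : Mon 2 4) = M15 11 :=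
    fun h => Subtype.ext (cmon_mk_eq_iff.mpr (by decide))
  have i44 : ∀ h, Mon.perm pσ4 (⟨Quot.mk _ (nd2 (nd2 (nd2 (lf4 1) (lf4 3)) (lf4 0)) (lf4 2)), h⟩ : Mon 2 4) = M15 6 :=
    fun h => Subtype.ext (cmon_mk_eq_iff.mpr (by decide))
  have i45 : ∀ h, Mon.perm pσ4 (⟨Quot.mk _ (nd2 (nd2 (nd2 (lf4 1) (lf4 3)) (lf4 2)) (lf4 0)), h⟩ : Mon 2 4) = M15 7 :=
    fun h => Subtype.ext (cmon_mk_eq_iff.mpr (by decide))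
  have i46 : ∀ h, Mon.perm pσ4 (⟨Quot.mk _ (nd2 (nd2 (lf4 0) (lf4 1)) (nd2 (lf4 2) (lf4 3))), h⟩ : Mon 2 4) = M15 13 :=
    fun h => Subtype.ext (cmon_mk_eq_iff.mpr (by decide))
  simp only [vBS, mk4, permVec_add, permVec_sub, permVec_single]
  erw [permVec_single, permVec_single, permVec_single, permVec_single, permVec_single, permVec_single]
  erw [i41, i42, i43, i44, i45, i46]

lemma pv5 : permVec pσ5 vBS = Finsupp.single (M15 4) 1 - Finsupp.single (M15 1) 1 - Finsupp.single (M15 9) 1 - Finsupp.single (M15 10) 1 + Finsupp.single (M15 11) 1 + Finsupp.single (M15 14) 1 := by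
  have i51 : ∀ h, Mon.perm pσ5 (⟨Quot.mk _ (nd2 (nd2 (nd2 (lf4 0) (lf4 1)) (lf4 2)) (lf4 3)), h⟩ : Mon 2 4) = M15 4 :=
    fun h => Subtype.ext (cmon_mk_eq_iff.mpr (by decide))
  have i52 : ∀ h, Mon.perm pσ5 (⟨Quot.mk _ (nd2 (nd2 (nd2 (lf4 0) (lf4 2)) (lf4 1)) (lf4 3)), h⟩ : Mon 2 4) = M15 1 :=
    fun h => Subtype.ext (cmon_mk_eq_iff.mpr (by decide))
  have i53 : ∀ h, Mon.perm pσ5 (⟨Quot.mk _ (nd2 (nd2 (nd2 (lf4 1) (lf4 2)) (lf4 3)) (lf4 0)), h⟩ : Mon 2 4) = M15 9 :=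
    fun h => Subtype.ext (cmon_mk_eq_iff.mpr (by decide))
  have i54 : ∀ h, Mon.perm pσ5 (⟨Quot.mk _ (nd2 (nd2 (nd2 (lf4 1) (lf4 3)) (lf4 0)) (lf4 2)), h⟩ : Mon 2 4) = M15 10 :=
    fun h => Subtype.ext (cmon_mk_eq_iff.mpr (by decide))
  have i55 : ∀ h, Mon.perm pσ5 (⟨Quot.mk _ (nd2 (nd2 (nd2 (lf4 1) (lf4 3)) (lf4 2)) (lf4 0)), h⟩ : Mon 2 4) = M15 11 :=
    fun h => Subtype.ext (cmon_mk_eq_iff.mpr (by decide))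
  have i56 : ∀ h, Mon.perm pσ5 (⟨Quot.mk _ (nd2 (nd2 (lf4 0) (lf4 1)) (nd2 (lf4 2) (lf4 3))), h⟩ : Mon 2 4) = M15 14 :=
    fun h => Subtype.ext (cmon_mk_eq_iff.mpr (by decide))
  simp only [vBS, mk4, permVec_add, permVec_sub, permVec_single]
  erw [permVec_single, permVec_single, permVec_single, permVec_single, permVec_single, permVec_single]
  erw [i51, i52, i53, i54, i55, i56]

lemma pv6 : permVec pσ6 vBS = Finsupp.single (M15 5) 1 - Finsupp.single (M15 3) 1 - Finsupp.single (M15 11) 1 - Finsupp.single (M15 8) 1 + Finsupp.single (M15 9) 1 + Finsupp.single (M15 14) 1 := by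
  have i61 : ∀ h, Mon.perm pσ6 (⟨Quot.mk _ (nd2 (nd2 (nd2 (lf4 0) (lf4 1)) (lf4 2)) (lf4 3)), h⟩ : Mon 2 4) = M15 5 :=
    fun h => Subtype.ext (cmon_mk_eq_iff.mpr (by decide))
  have i62 : ∀ h, Mon.perm pσ6 (⟨Quot.mk _ (nd2 (nd2 (nd2 (lf4 0) (lf4 2)) (lf4 1)) (lf4 3)), h⟩ : Mon 2 4) = M15 3 :=
    fun h => Subtype.ext (cmon_mk_eq_iff.mpr (by decide))
  have i63 : ∀ h, Mon.perm pσ6 (⟨Quot.mk _ (nd2 (nd2 (nd2 (lf4 1) (lf4 2)) (lf4 3)) (lf4 0)), h⟩ : Mon 2 4) = M15 11 :=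
    fun h => Subtype.ext (cmon_mk_eq_iff.mpr (by decide))
  have i64 : ∀ h, Mon.perm pσ6 (⟨Quot.mk _ (nd2 (nd2 (nd2 (lf4 1) (lf4 3)) (lf4 0)) (lf4 2)), h⟩ : Mon 2 4) = M15 8 :=
    fun h => Subtype.ext (cmon_mk_eq_iff.mpr (by decide))
  have i65 : ∀ h, Mon.perm pσ6 (⟨Quot.mk _ (nd2 (nd2 (nd2 (lf4 1) (lf4 3)) (lf4 2)) (lf4 0)), h⟩ : Mon 2 4) = M15 9 :=
    fun h => Subtype.ext (cmon_mk_eq_iff.mpr (by decide))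
  have i66 : ∀ h, Mon.perm pσ6 (⟨Quot.mk _ (nd2 (nd2 (lf4 0) (lf4 1)) (nd2 (lf4 2) (lf4 3))), h⟩ : Mon 2 4) = M15 14 :=
    fun h => Subtype.ext (cmon_mk_eq_iff.mpr (by decide))
  simp only [vBS, mk4, permVec_add, permVec_sub, permVec_single]
  erw [permVec_single, permVec_single, permVec_single, permVec_single, permVec_single, permVec_single]
  erw [i61, i62, i63, i64, i65, i66]

lemma pv7 : permVec pσ7 vBS = Finsupp.single (M15 0) 1 - Finsupp.single (M15 6) 1 - Finsupp.single (M15 3) 1 - Finsupp.single (M15 4) 1 + Finsupp.single (M15 5) 1 + Finsupp.single (M15 12) 1 := by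
  have i71 : ∀ h, Mon.perm pσ7 (⟨Quot.mk _ (nd2 (nd2 (nd2 (lf4 0) (lf4 1)) (lf4 2)) (lf4 3)), h⟩ : Mon 2 4) = M15 0 :=
    fun h => Subtype.ext (cmon_mk_eq_iff.mpr (by decide))
  have i72 : ∀ h, Mon.perm pσ7 (⟨Quot.mk _ (nd2 (nd2 (nd2 (lf4 0) (lf4 2)) (lf4 1)) (lf4 3)), h⟩ : Mon 2 4) = M15 6 :=
    fun h => Subtype.ext (cmon_mk_eq_iff.mpr (by decide))
  have i73 : ∀ h, Mon.perm pσ7 (⟨Quot.mk _ (nd2 (nd2 (nd2 (lf4 1) (lf4 2)) (lf4 3)) (lf4 0)), h⟩ : Mon 2 4) = M15 3 :=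
    fun h => Subtype.ext (cmon_mk_eq_iff.mpr (by decide))
  have i74 : ∀ h, Mon.perm pσ7 (⟨Quot.mk _ (nd2 (nd2 (nd2 (lf4 1) (lf4 3)) (lf4 0)) (lf4 2)), h⟩ : Mon 2 4) = M15 4 :=
    fun h => Subtype.ext (cmon_mk_eq_iff.mpr (by decide))
  have i75 : ∀ h, Mon.perm pσ7 (⟨Quot.mk _ (nd2 (nd2 (nd2 (lf4 1) (lf4 3)) (lf4 2)) (lf4 0)), h⟩ : Mon 2 4) = M15 5 :=
    fun h => Subtype.ext (cmon_mk_eq_iff.mpr (by decide))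
  have i76 : ∀ h, Mon.perm pσ7 (⟨Quot.mk _ (nd2 (nd2 (lf4 0) (lf4 1)) (nd2 (lf4 2) (lf4 3))), h⟩ : Mon 2 4) = M15 12 :=
    fun h => Subtype.ext (cmon_mk_eq_iff.mpr (by decide))
  simp only [vBS, mk4, permVec_add, permVec_sub, permVec_single]
  erw [permVec_single, permVec_single, permVec_single, permVec_single, permVec_single, permVec_single]
  erw [i71, i72, i73, i74, i75, i76]

lemma pv8 : permVec pσ8 vBS = Finsupp.single (M15 6) 1 - Finsupp.single (M15 0) 1 - Finsupp.single (M15 3) 1 - Finsupp.single (M15 11) 1 + Finsupp.single (M15 10) 1 + Finsupp.single (M15 14) 1 := by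
  have i81 : ∀ h, Mon.perm pσ8 (⟨Quot.mk _ (nd2 (nd2 (nd2 (lf4 0) (lf4 1)) (lf4 2)) (lf4 3)), h⟩ : Mon 2 4) = M15 6 :=
    fun h => Subtype.ext (cmon_mk_eq_iff.mpr (by decide))
  have i82 : ∀ h, Mon.perm pσ8 (⟨Quot.mk _ (nd2 (nd2 (nd2 (lf4 0) (lf4 2)) (lf4 1)) (lf4 3)), h⟩ : Mon 2 4) = M15 0 :=
    fun h => Subtype.ext (cmon_mk_eq_iff.mpr (by decide))
  have i83 : ∀ h, Mon.perm pσ8 (⟨Quot.mk _ (nd2 (nd2 (nd2 (lf4 1) (lf4 2)) (lf4 3)) (lf4 0)), h⟩ : Mon 2 4) = M15 3 :=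
    fun h => Subtype.ext (cmon_mk_eq_iff.mpr (by decide))
  have i84 : ∀ h, Mon.perm pσ8 (⟨Quot.mk _ (nd2 (nd2 (nd2 (lf4 1) (lf4 3)) (lf4 0)) (lf4 2)), h⟩ : Mon 2 4) = M15 11 :=
    fun h => Subtype.ext (cmon_mk_eq_iff.mpr (by decide))
  have i85 : ∀ h, Mon.perm pσ8 (⟨Quot.mk _ (nd2 (nd2 (nd2 (lf4 1) (lf4 3)) (lf4 2)) (lf4 0)), h⟩ : Mon 2 4) = M15 10 :=
    fun h => Subtype.ext (cmon_mk_eq_iff.mpr (by decide))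
  have i86 : ∀ h, Mon.perm pσ8 (⟨Quot.mk _ (nd2 (nd2 (lf4 0) (lf4 1)) (nd2 (lf4 2) (lf4 3))), h⟩ : Mon 2 4) = M15 14 :=
    fun h => Subtype.ext (cmon_mk_eq_iff.mpr (by decide))
  simp only [vBS, mk4, permVec_add, permVec_sub, permVec_single]
  erw [permVec_single, permVec_single, permVec_single, permVec_single, permVec_single, permVec_single]
  erw [i81, i82, i83, i84, i85, i86]

lemma pv9 : permVec pσ9 vBS = Finsupp.single (M15 7) 1 - Finsupp.single (M15 9) 1 - Finsupp.single (M15 10) 1 - Finsupp.single (M15 2) 1 + Finsupp.single (M15 3) 1 + Finsupp.single (M15 14) 1 := by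
  have i91 : ∀ h, Mon.perm pσ9 (⟨Quot.mk _ (nd2 (nd2 (nd2 (lf4 0) (lf4 1)) (lf4 2)) (lf4 3)), h⟩ : Mon 2 4) = M15 7 :=
    fun h => Subtype.ext (cmon_mk_eq_iff.mpr (by decide))
  have i92 : ∀ h, Mon.perm pσ9 (⟨Quot.mk _ (nd2 (nd2 (nd2 (lf4 0) (lf4 2)) (lf4 1)) (lf4 3)), h⟩ : Mon 2 4) = M15 9 :=
    fun h => Subtype.ext (cmon_mk_eq_iff.mpr (by decide))
  have i93 : ∀ h, Mon.perm pσ9 (⟨Quot.mk _ (nd2 (nd2 (nd2 (lf4 1) (lf4 2)) (lf4 3)) (lf4 0)), h⟩ : Mon 2 4) = M15 10 :=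
    fun h => Subtype.ext (cmon_mk_eq_iff.mpr (by decide))
  have i94 : ∀ h, Mon.perm pσ9 (⟨Quot.mk _ (nd2 (nd2 (nd2 (lf4 1) (lf4 3)) (lf4 0)) (lf4 2)), h⟩ : Mon 2 4) = M15 2 :=
    fun h => Subtype.ext (cmon_mk_eq_iff.mpr (by decide))
  have i95 : ∀ h, Mon.perm pσ9 (⟨Quot.mk _ (nd2 (nd2 (nd2 (lf4 1) (lf4 3)) (lf4 2)) (lf4 0)), h⟩ : Mon 2 4) = M15 3 :=
    fun h => Subtype.ext (cmon_mk_eq_iff.mpr (by decide))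
  have i96 : ∀ h, Mon.perm pσ9 (⟨Quot.mk _ (nd2 (nd2 (lf4 0) (lf4 1)) (nd2 (lf4 2) (lf4 3))), h⟩ : Mon 2 4) = M15 14 :=
    fun h => Subtype.ext (cmon_mk_eq_iff.mpr (by decide))
  simp only [vBS, mk4, permVec_add, permVec_sub, permVec_single]
  erw [permVec_single, permVec_single, permVec_single, permVec_single, permVec_single, permVec_single]
  erw [i91, i92, i93, i94, i95, i96]


set_option maxHeartbeats 2000000 in
/-- every multilinear degree-4 identity of binary intermolecular
recombination is a `ℚ`-linear combination of the coefficient vectors obtained by applying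
the 24 permutations of the variables `a,b,c,d` to the identity
`⟦⟦⟦a,b⟧,c⟧,d⟧ − ⟦⟦⟦a,c⟧,b⟧,d⟧ − ⟦⟦⟦b,c⟧,d⟧,a⟧ − ⟦⟦⟦b,d⟧,a⟧,c⟧ + ⟦⟦⟦b,d⟧,c⟧,a⟧
+ ⟦⟦a,b⟧,⟦c,d⟧⟧ = 0`. -/
theorem degree4_identities_consequences_of_reduced_identity {X : Type*} [Fintype X] [Nonempty X]
    (c : Mon 2 4 →₀ ℚ) (hc : evalPoly X c = 0) :
    c ∈ Submodule.span ℚ (Set.range fun σ : Equiv.Perm (Fin 4) => permVec σ vBS) := by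
  have x : X := Classical.arbitrary X
  have hply : evalPoly X c
      = c (M15 0) • Mon.eval X (M15 0)
        + c (M15 1) • Mon.eval X (M15 1)
        + c (M15 2) • Mon.eval X (M15 2)
        + c (M15 3) • Mon.eval X (M15 3)
        + c (M15 4) • Mon.eval X (M15 4)
        + c (M15 5) • Mon.eval X (M15 5)
        + c (M15 6) • Mon.eval X (M15 6)
        + c (M15 7) • Mon.eval X (M15 7)
        + c (M15 8) • Mon.eval X (M15 8)
        + c (M15 9) • Mon.eval X (M15 9)
        + c (M15 10) • Mon.eval X (M15 10)
        + c (M15 11) • Mon.eval X (M15 11)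
        + c (M15 12) • Mon.eval X (M15 12)
        + c (M15 13) • Mon.eval X (M15 13)
        + c (M15 14) • Mon.eval X (M15 14) := by
    conv_lhs => rw [c_decomp c]
    simp only [evalPoly, map_add, map_smul, Finsupp.linearCombination_single, one_smul]
  rw [hply] at hc
  have happ := congrFun hc (vv x)
  simp only [Pi.add_apply, Pi.smul_apply, Pi.zero_apply] at happ
  rw [evB0 x, evB1 x, evB2 x, evB3 x, evB4 x, evB5 x, evB6 x, evB7 x, evB8 x, evB9 x, evB10 x, evB11 x, evB12 x, evB13 x, evB14 x] at happ
  simp only [br_addl, br_addr, br_s] at happ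
  have e1 : c (M15 3) + c (M15 5) + c (M15 7) + c (M15 9) + 2 * c (M15 10) + 2 * c (M15 11) + c (M15 13) + c (M15 14) = 0 := by
    have h := congrArg (fun F : RXn X 2 => F ![wd x 0, wd x 3]) happ
    norm_num [Finsupp.add_apply, Finsupp.smul_apply, sv_apply, Finsupp.coe_zero,
      Pi.zero_apply] at h
    linear_combination h
  have e2 : c (M15 1) + c (M15 4) + c (M15 7) + 2 * c (M15 8) + 2 * c (M15 9) + c (M15 11) + c (M15 12) + c (M15 14) = 0 := by
    have h := congrArg (fun F : RXn X 2 => F ![wd x 0, wd x 5]) happ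
    norm_num [Finsupp.add_apply, Finsupp.smul_apply, sv_apply, Finsupp.coe_zero,
      Pi.zero_apply] at h
    linear_combination h
  have e3 : c (M15 0) + c (M15 2) + 2 * c (M15 6) + 2 * c (M15 7) + c (M15 9) + c (M15 11) + c (M15 12) + c (M15 13) = 0 := by
    have h := congrArg (fun F : RXn X 2 => F ![wd x 0, wd x 7]) happ
    norm_num [Finsupp.add_apply, Finsupp.smul_apply, sv_apply, Finsupp.coe_zero,
      Pi.zero_apply] at h
    linear_combination h
  have e4 : c (M15 1) + c (M15 3) + 2 * c (M15 4) + 2 * c (M15 5) + c (M15 8) + c (M15 10) + c (M15 12) + c (M15 13) = 0 := by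
    have h := congrArg (fun F : RXn X 2 => F ![wd x 2, wd x 5]) happ
    norm_num [Finsupp.add_apply, Finsupp.smul_apply, sv_apply, Finsupp.coe_zero,
      Pi.zero_apply] at h
    linear_combination h
  have e5 : c (M15 0) + 2 * c (M15 2) + 2 * c (M15 3) + c (M15 5) + c (M15 6) + c (M15 10) + c (M15 12) + c (M15 14) = 0 := by
    have h := congrArg (fun F : RXn X 2 => F ![wd x 2, wd x 7]) happ
    norm_num [Finsupp.add_apply, Finsupp.smul_apply, sv_apply, Finsupp.coe_zero,
      Pi.zero_apply] at h
    linear_combination h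
  have e6 : 2 * c (M15 0) + 2 * c (M15 1) + c (M15 2) + c (M15 4) + c (M15 6) + c (M15 8) + c (M15 13) + c (M15 14) = 0 := by
    have h := congrArg (fun F : RXn X 2 => F ![wd x 4, wd x 7]) happ
    norm_num [Finsupp.add_apply, Finsupp.smul_apply, sv_apply, Finsupp.coe_zero,
      Pi.zero_apply] at h
    linear_combination h
  have h9 : c (M15 9) = 2 * c (M15 0) - 2 * c (M15 1) + 3 * c (M15 2) + c (M15 3) - 3 * c (M15 4) - c (M15 5) + 3 * c (M15 6) + c (M15 7) - 3 * c (M15 8) := by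
    linear_combination e2 + (-1) * e3 + e4 + (-1) * e5
  have h10 : c (M15 10) = (3/2) * c (M15 0) - (1/2) * c (M15 1) + (3/2) * c (M15 2) - (1/2) * c (M15 3) - (3/2) * c (M15 4) - (3/2) * c (M15 5) + 2 * c (M15 6) + c (M15 7) - c (M15 8) := by
    linear_combination (1/4) * e1 + (1/4) * e2 + (-3/4) * e3 + (3/4) * e4 + (-1/4) * e5 + (-1/4) * e6
  have h11 : c (M15 11) = -(3/2) * c (M15 0) + (5/2) * c (M15 1) - (5/2) * c (M15 2) - (1/2) * c (M15 3) + (7/2) * c (M15 4) + (3/2) * c (M15 5) - 3 * c (M15 6) - 2 * c (M15 7) + 3 * c (M15 8) := by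
    linear_combination (1/4) * e1 + (-3/4) * e2 + (5/4) * e3 + (-5/4) * e4 + (3/4) * e5 + (-1/4) * e6
  have h12 : c (M15 12) = -c (M15 0) + c (M15 1) - 2 * c (M15 2) - c (M15 3) + c (M15 4) - 2 * c (M15 6) - c (M15 7) + c (M15 8) := by
    linear_combination (-1/4) * e1 + (-1/4) * e2 + (3/4) * e3 + (-1/4) * e4 + (3/4) * e5 + (-1/4) * e6
  have h13 : c (M15 13) = -(1/2) * c (M15 0) - (3/2) * c (M15 1) + (1/2) * c (M15 2) + (1/2) * c (M15 3) - (3/2) * c (M15 4) - (1/2) * c (M15 5) - c (M15 8) := by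
    linear_combination (1/2) * e4 + (-1/2) * e5 + (1/2) * e6
  have h14 : c (M15 14) = -(3/2) * c (M15 0) - (1/2) * c (M15 1) - (3/2) * c (M15 2) - (1/2) * c (M15 3) + (1/2) * c (M15 4) + (1/2) * c (M15 5) - c (M15 6) := by
    linear_combination (-1/2) * e4 + (1/2) * e5 + (1/2) * e6
  have key : c = (-(1/4) * c (M15 0) + (1/4) * c (M15 1) - (3/4) * c (M15 2) - (1/4) * c (M15 3) + (1/4) * c (M15 4) - (1/4) * c (M15 5) - (1/2) * c (M15 6) - (1/2) * c (M15 7)) • permVec pσ1 vBS 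
      + (-(3/4) * c (M15 0) + (7/4) * c (M15 1) - (5/4) * c (M15 2) - (3/4) * c (M15 3) + (7/4) * c (M15 4) + (1/4) * c (M15 5) - (3/2) * c (M15 6) - (1/2) * c (M15 7) + c (M15 8)) • permVec pσ2 vBS 
      + (-(3/4) * c (M15 0) - (1/4) * c (M15 1) - (1/4) * c (M15 2) + (1/4) * c (M15 3) - (1/4) * c (M15 4) + (1/4) * c (M15 5) - (1/2) * c (M15 6) - (1/2) * c (M15 7)) • permVec pσ3 vBS 
      + ((1/4) * c (M15 0) - (5/4) * c (M15 1) + (3/4) * c (M15 2) + (1/4) * c (M15 3) - (5/4) * c (M15 4) - (3/4) * c (M15 5) + (1/2) * c (M15 6) + (1/2) * c (M15 7) - c (M15 8)) • permVec pσ4 vBS 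
      + (-(3/4) * c (M15 0) + (3/4) * c (M15 1) - (5/4) * c (M15 2) - (3/4) * c (M15 3) + (7/4) * c (M15 4) + (1/4) * c (M15 5) - (3/2) * c (M15 6) - (1/2) * c (M15 7) + c (M15 8)) • permVec pσ5 vBS 
      + ((1/4) * c (M15 0) - (1/4) * c (M15 1) + (3/4) * c (M15 2) + (1/4) * c (M15 3) - (1/4) * c (M15 4) + (1/4) * c (M15 5) + (1/2) * c (M15 6) + (1/2) * c (M15 7) - c (M15 8)) • permVec pσ6 vBS 
      + (-c (M15 1) - c (M15 4)) • permVec pσ7 vBS 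
      + (-(1/2) * c (M15 0) - (1/2) * c (M15 1) - (1/2) * c (M15 2) - (1/2) * c (M15 3) - (1/2) * c (M15 4) - (1/2) * c (M15 5)) • permVec pσ8 vBS 
      + (-(1/2) * c (M15 0) - (1/2) * c (M15 1) - (1/2) * c (M15 2) + (1/2) * c (M15 3) - (1/2) * c (M15 4) + (1/2) * c (M15 5)) • permVec pσ9 vBS := by
    conv_lhs => rw [c_decomp c]
    rw [h9, h10, h11, h12, h13, h14, pv1, pv2, pv3, pv4, pv5, pv6, pv7, pv8, pv9]
    module
  rw [key]
  have mem : ∀ (σ : Equiv.Perm (Fin 4)) (q : ℚ),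
      q • permVec σ vBS ∈ Submodule.span ℚ (Set.range fun σ : Equiv.Perm (Fin 4) => permVec σ vBS) :=
    fun σ q => Submodule.smul_mem _ _ (Submodule.subset_span ⟨σ, rfl⟩)
  exact Submodule.add_mem _ (Submodule.add_mem _ (Submodule.add_mem _ (Submodule.add_mem _
    (Submodule.add_mem _ (Submodule.add_mem _ (Submodule.add_mem _ (Submodule.add_mem _
    (mem pσ1 _) (mem pσ2 _)) (mem pσ3 _)) (mem pσ4 _)) (mem pσ5 _)) (mem pσ6 _))
    (mem pσ7 _)) (mem pσ8 _)) (mem pσ9 _)
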